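/- arXiv:2107.13225 — 3 statements merged into one kernel-verified Lean document; each statement's English description precedes it below -/
import Mathlib

section
/- If a mapping function M satisfies M(ω) = c·ω^{n+1} + O(ω^{n+2}) near ω = 0 for some integer n ≥ 2 and constant c, and τ/β = O(Δx^{n₁}) with n₁ ≥ 1, then M(τ/β) = O(Δx^{(n+1)·n₁}); in particular for n ≥ 2 and n₁ ≥ 1, M(τ/β) = O(Δx^{r}) with r ≥ 3, so the weights α_k = d_k(1 + M(τ/β_k)) satisfy α_k − d_k = O(Δx³) and hence ω_k − d_k = O(Δx³). -/
set_option maxHeartbeats 1000000 in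
/-- Mechanism of the mapped WENO-Z scheme: if M(ω) = c·ω^{n+1} + O(ω^{n+2}) near 0
with n ≥ 2, and the arguments g_k(Δx) = τ/β_k are O(Δx^{n₁}) with n₁ ≥ 1, then
M(g_k) = O(Δx^{(n+1)n₁}) and the normalized weights satisfy ω_k − d_k = O(Δx³). -/
theorem stmt17 (n n₁ : ℕ) (hn : 2 ≤ n) (hn₁ : 1 ≤ n₁)
    (M : ℝ → ℝ) (c : ℝ)
    (hM : ∃ C > 0, ∃ ε > 0, ∀ ω : ℝ, |ω| < ε → |M ω - c * ω ^ (n + 1)| ≤ C * |ω| ^ (n + 2))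
    (d : Fin 2 → ℝ) (hd : ∀ k, 0 < d k) (hsum : d 0 + d 1 = 1)
    (g : Fin 2 → ℝ → ℝ)
    (hg : ∀ k, ∃ C > 0, ∃ δ > 0, ∀ h : ℝ, 0 < h → h < δ → |g k h| ≤ C * h ^ n₁) :
    (∀ k, ∃ C > 0, ∃ δ > 0, ∀ h : ℝ, 0 < h → h < δ →
      |M (g k h)| ≤ C * h ^ ((n + 1) * n₁)) ∧
    (∀ k, ∃ C > 0, ∃ δ > 0, ∀ h : ℝ, 0 < h → h < δ →
      |d k * (1 + M (g k h))
          / (d 0 * (1 + M (g 0 h)) + d 1 * (1 + M (g 1 h))) - d k| ≤ C * h ^ 3) := by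
  -- Step 0: |M ω| ≤ K |ω|^(n+1) near 0
  obtain ⟨C, hC, ε, hε, hMb⟩ := hM
  have key : ∃ K > 0, ∃ ε' > 0, ∀ ω : ℝ, |ω| < ε' → |M ω| ≤ K * |ω| ^ (n + 1) := by
    refine ⟨|c| + C, by positivity, min ε 1, by positivity, fun ω hω => ?_⟩
    have h1 : |ω| < ε := lt_of_lt_of_le hω (min_le_left _ _)
    have h2 : |ω| ≤ 1 := le_of_lt (lt_of_lt_of_le hω (min_le_right _ _))
    have hb := hMb ω h1
    have habs : |M ω| ≤ |M ω - c * ω ^ (n + 1)| + |c * ω ^ (n + 1)| := by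
      calc |M ω| = |(M ω - c * ω ^ (n + 1)) + c * ω ^ (n + 1)| := by ring_nf
        _ ≤ _ := abs_add_le _ _
    have h3 : |c * ω ^ (n + 1)| = |c| * |ω| ^ (n + 1) := by
      rw [abs_mul, abs_pow]
    have h4 : |ω| ^ (n + 2) ≤ |ω| ^ (n + 1) :=
      pow_le_pow_of_le_one (abs_nonneg _) h2 (by omega)
    calc |M ω| ≤ C * |ω| ^ (n + 2) + |c| * |ω| ^ (n + 1) := by
          rw [h3] at habs; linarith
      _ ≤ C * |ω| ^ (n + 1) + |c| * |ω| ^ (n + 1) := by nlinarith [abs_nonneg ω]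
      _ = (|c| + C) * |ω| ^ (n + 1) := by ring
  obtain ⟨K, hK, ε', hε', hKb⟩ := key
  -- Part 1
  have part1 : ∀ k, ∃ C > 0, ∃ δ > 0, ∀ h : ℝ, 0 < h → h < δ →
      |M (g k h)| ≤ C * h ^ ((n + 1) * n₁) := by
    intro k
    obtain ⟨C₁, hC₁, δ₁, hδ₁, hgk⟩ := hg k
    refine ⟨K * C₁ ^ (n + 1), by positivity, min δ₁ (min 1 (ε' / C₁)), by positivity,
      fun h hh hhδ => ?_⟩
    have hd1 : h < δ₁ := lt_of_lt_of_le hhδ (min_le_left _ _)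
    have hle1 : h ≤ 1 := le_of_lt (lt_of_lt_of_le hhδ (le_trans (min_le_right _ _) (min_le_left _ _)))
    have hdε : h < ε' / C₁ := lt_of_lt_of_le hhδ (le_trans (min_le_right _ _) (min_le_right _ _))
    have hgb : |g k h| ≤ C₁ * h ^ n₁ := hgk h hh hd1
    have hpow : h ^ n₁ ≤ h := by
      calc h ^ n₁ ≤ h ^ 1 := pow_le_pow_of_le_one (le_of_lt hh) hle1 hn₁
        _ = h := pow_one h
    have hsmall : |g k h| < ε' := by
      calc |g k h| ≤ C₁ * h ^ n₁ := hgb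
        _ ≤ C₁ * h := by nlinarith
        _ < ε' := by rw [lt_div_iff₀ hC₁] at hdε; linarith
    have hMg := hKb _ hsmall
    have hgpow : |g k h| ^ (n + 1) ≤ (C₁ * h ^ n₁) ^ (n + 1) :=
      pow_le_pow_left₀ (abs_nonneg _) hgb _
    calc |M (g k h)| ≤ K * |g k h| ^ (n + 1) := hMg
      _ ≤ K * (C₁ * h ^ n₁) ^ (n + 1) := by nlinarith
      _ = K * C₁ ^ (n + 1) * h ^ ((n + 1) * n₁) := by
          rw [mul_pow, ← pow_mul, Nat.mul_comm n₁ (n + 1)]; ring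
  refine ⟨part1, fun k => ?_⟩
  obtain ⟨C₀, hC₀, δ₀, hδ₀, hb₀⟩ := part1 0
  obtain ⟨Ca, hCa, δa, hδa, hba⟩ := part1 1
  obtain ⟨Ck, hCk, δk, hδk, hbk⟩ := part1 k
  refine ⟨2 * (Ck + C₀ + Ca), by positivity,
    min δ₀ (min δa (min δk (min 1 (1 / (2 * (C₀ + Ca)))))), by positivity,
    fun h hh hhδ => ?_⟩
  have h0 : h < δ₀ := lt_of_lt_of_le hhδ (min_le_left _ _)
  have ha : h < δa := lt_of_lt_of_le hhδ (le_trans (min_le_right _ _) (min_le_left _ _))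
  have hk : h < δk := lt_of_lt_of_le hhδ (le_trans (min_le_right _ _)
    (le_trans (min_le_right _ _) (min_le_left _ _)))
  have h1 : h ≤ 1 := le_of_lt (lt_of_lt_of_le hhδ (le_trans (min_le_right _ _)
    (le_trans (min_le_right _ _) (le_trans (min_le_right _ _) (min_le_left _ _)))))
  have hhalf : h < 1 / (2 * (C₀ + Ca)) := lt_of_lt_of_le hhδ (le_trans (min_le_right _ _)
    (le_trans (min_le_right _ _) (le_trans (min_le_right _ _) (min_le_right _ _))))
  set m := (n + 1) * n₁ with hm
  have hm3 : 3 ≤ m := by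
    have := Nat.mul_le_mul (show 3 ≤ n + 1 by omega) hn₁
    simpa using this
  have hpm : h ^ m ≤ h ^ 3 := pow_le_pow_of_le_one (le_of_lt hh) h1 hm3
  have hp3 : h ^ 3 ≤ h := by
    calc h ^ 3 ≤ h ^ 1 := pow_le_pow_of_le_one (le_of_lt hh) h1 (by omega)
      _ = h := pow_one h
  have B0 : |M (g 0 h)| ≤ C₀ * h ^ m := hb₀ h hh h0
  have Ba : |M (g 1 h)| ≤ Ca * h ^ m := hba h hh ha
  have Bk : |M (g k h)| ≤ Ck * h ^ m := hbk h hh hk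
  have hd0 := hd 0
  have hd1 := hd 1
  have hdk := hd k
  have hd0le : d 0 ≤ 1 := by linarith
  have hd1le : d 1 ≤ 1 := by linarith
  have hdkle : d k ≤ 1 := by
    fin_cases k <;> simpa using by assumption
  -- denominator bound
  set D := d 0 * (1 + M (g 0 h)) + d 1 * (1 + M (g 1 h)) with hD
  have habs0 : -(C₀ * h ^ m) ≤ M (g 0 h) ∧ M (g 0 h) ≤ C₀ * h ^ m := abs_le.mp B0
  have habsa : -(Ca * h ^ m) ≤ M (g 1 h) ∧ M (g 1 h) ≤ Ca * h ^ m := abs_le.mp Ba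
  have hhm : h ^ m ≤ h := le_trans hpm hp3
  have hsmall0 : C₀ * h ^ m ≤ C₀ * h := by nlinarith
  have hsmalla : Ca * h ^ m ≤ Ca * h := by nlinarith
  have hsum2 : (C₀ + Ca) * h < 1 / 2 := by
    rw [lt_div_iff₀ (by positivity : (0:ℝ) < 2 * (C₀ + Ca))] at hhalf
    linarith
  have hpownn : (0:ℝ) ≤ h ^ m := pow_nonneg hh.le m
  have e0 : -(C₀ * h ^ m) ≤ d 0 * M (g 0 h) := by
    have t1 : d 0 * -(C₀ * h ^ m) ≤ d 0 * M (g 0 h) :=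
      mul_le_mul_of_nonneg_left habs0.1 hd0.le
    have t2 : C₀ * h ^ m * d 0 ≤ C₀ * h ^ m * 1 :=
      mul_le_mul_of_nonneg_left hd0le (by positivity)
    linarith [t1, t2]
  have e1 : -(Ca * h ^ m) ≤ d 1 * M (g 1 h) := by
    have t1 : d 1 * -(Ca * h ^ m) ≤ d 1 * M (g 1 h) :=
      mul_le_mul_of_nonneg_left habsa.1 hd1.le
    have t2 : Ca * h ^ m * d 1 ≤ Ca * h ^ m * 1 :=
      mul_le_mul_of_nonneg_left hd1le (by positivity)
    linarith [t1, t2]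
  have hDge : (1:ℝ)/2 ≤ D := by
    have hDeq : D = 1 + (d 0 * M (g 0 h) + d 1 * M (g 1 h)) := by
      rw [hD]; ring_nf; linarith [hsum]
    rw [hDeq]
    linarith [hsmall0, hsmalla, hsum2]
  have hDpos : 0 < D := by linarith
  have hDne : D ≠ 0 := ne_of_gt hDpos
  have heq : d k * (1 + M (g k h)) / D - d k
      = d k * (M (g k h) - (d 0 * M (g 0 h) + d 1 * M (g 1 h))) / D := by
    field_simp
    rw [hD]; ring_nf; nlinarith [hsum]
  rw [heq, abs_div, abs_of_pos hDpos]
  have hnum : |d k * (M (g k h) - (d 0 * M (g 0 h) + d 1 * M (g 1 h)))|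
      ≤ (Ck + C₀ + Ca) * h ^ m := by
    rw [abs_mul, abs_of_pos hdk]
    have : |M (g k h) - (d 0 * M (g 0 h) + d 1 * M (g 1 h))|
        ≤ |M (g k h)| + (d 0 * |M (g 0 h)| + d 1 * |M (g 1 h)|) := by
      calc |M (g k h) - (d 0 * M (g 0 h) + d 1 * M (g 1 h))|
          ≤ |M (g k h)| + |d 0 * M (g 0 h) + d 1 * M (g 1 h)| := abs_sub _ _
        _ ≤ |M (g k h)| + (|d 0 * M (g 0 h)| + |d 1 * M (g 1 h)|) := by
            linarith [abs_add_le (d 0 * M (g 0 h)) (d 1 * M (g 1 h))]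
        _ = _ := by rw [abs_mul, abs_mul, abs_of_pos hd0, abs_of_pos hd1]
    have u1 : d k * |M (g k h) - (d 0 * M (g 0 h) + d 1 * M (g 1 h))|
        ≤ |M (g k h) - (d 0 * M (g 0 h) + d 1 * M (g 1 h))| :=
      mul_le_of_le_one_left (abs_nonneg _) hdkle
    have u2 : d 0 * |M (g 0 h)| ≤ |M (g 0 h)| :=
      mul_le_of_le_one_left (abs_nonneg _) hd0le
    have u3 : d 1 * |M (g 1 h)| ≤ |M (g 1 h)| :=
      mul_le_of_le_one_left (abs_nonneg _) hd1le
    linarith [u1, u2, u3, this, B0, Ba, Bk]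
  calc |d k * (M (g k h) - (d 0 * M (g 0 h) + d 1 * M (g 1 h)))| / D
      ≤ ((Ck + C₀ + Ca) * h ^ m) / (1/2) := by
        apply div_le_div₀ (by positivity) hnum (by norm_num) hDge
    _ = 2 * (Ck + C₀ + Ca) * h ^ m := by ring
    _ ≤ 2 * (Ck + C₀ + Ca) * h ^ 3 := by nlinarith
end

section
/- Define M(ϖ) = ϖ³ / (ϖ² + c₂·ϖ·(c₃ − ϖ)² + c₁·(c₃ − ϖ)²) for 0 ≤ ϖ ≤ c₃ and M(ϖ) = ϖ for ϖ > c₃, with constants c₁, c₂ > 0 and c₃ > 0. Then M(0) = 0, M'(0) = 0, M''(0) = 0, M'''(0) = 6/(c₁ c₃²) ≠ 0, and M(c₃) = c₃; in particular M satisfies M(ϖ) = O(ϖ³) as ϖ → 0⁺. -/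
open Filter

private lemma aux18 (a b c d : ℝ) (hd : d ≠ 0) (Q g g₁ g₂ : ℝ → ℝ)
    (hQ : Q = fun x => a*x^3 + b*x^2 + c*x + d)
    (hg : g = fun x => x^3 / Q x)
    (hg₁ : g₁ = fun x => (b*x^4 + 2*c*x^3 + 3*d*x^2) / (Q x)^2)
    (hg₂ : g₂ = fun x => ((4*b*x^3 + 6*c*x^2 + 6*d*x) * Q x
        - (2*(b*x^4 + 2*c*x^3 + 3*d*x^2)) * (3*a*x^2 + 2*b*x + c)) / (Q x)^3) :
    deriv g 0 = 0 ∧ deriv (deriv g) 0 = 0 ∧ deriv (deriv (deriv g)) 0 = 6 / d := by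
  have hQ0 : Q 0 = d := by simp [hQ]
  have hQ0ne : Q 0 ≠ 0 := by rw [hQ0]; exact hd
  have hQder : ∀ x : ℝ, HasDerivAt Q (3*a*x^2 + 2*b*x + c) x := by
    intro x
    rw [hQ]
    exact (((((hasDerivAt_pow 3 x).const_mul a).add
      ((hasDerivAt_pow 2 x).const_mul b)).add
      (HasDerivAt.const_mul c (hasDerivAt_id x))).add_const d).congr_deriv (by push_cast; ring)
  have hNder : ∀ x : ℝ, HasDerivAt (fun x : ℝ => b*x^4 + 2*c*x^3 + 3*d*x^2)
      (4*b*x^3 + 6*c*x^2 + 6*d*x) x := by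
    intro x
    exact ((((hasDerivAt_pow 4 x).const_mul b).add
      ((hasDerivAt_pow 3 x).const_mul (2*c))).add
      ((hasDerivAt_pow 2 x).const_mul (3*d))).congr_deriv (by push_cast; ring)
  have h1 : ∀ x : ℝ, Q x ≠ 0 → HasDerivAt g (g₁ x) x := by
    intro x hx
    rw [hg, hg₁]
    exact ((hasDerivAt_pow 3 x).div (hQder x) hx).congr_deriv
      (by simp only [hQ]; push_cast; ring)
  have h2 : ∀ x : ℝ, Q x ≠ 0 → HasDerivAt g₁ (g₂ x) x := by
    intro x hx
    rw [hg₁, hg₂]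
    refine ((hNder x).div ((hQder x).pow 2) (pow_ne_zero 2 hx)).congr_deriv ?_
    field_simp
    simp only [Pi.pow_apply]
    ring
  have hQcont : Continuous Q := by rw [hQ]; continuity
  have hev : ∀ᶠ x in nhds (0:ℝ), Q x ≠ 0 := hQcont.continuousAt.eventually_ne hQ0ne
  have hder1 : deriv g =ᶠ[nhds (0:ℝ)] g₁ := hev.mono fun x hx => (h1 x hx).deriv
  have hder2 : deriv g₁ =ᶠ[nhds (0:ℝ)] g₂ := hev.mono fun x hx => (h2 x hx).deriv
  have h3 : HasDerivAt g₂ (6/d) 0 := by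
    rw [hg₂]
    have hA : HasDerivAt (fun x : ℝ => 4*b*x^3 + 6*c*x^2 + 6*d*x)
        (12*b*0^2 + 12*c*0 + 6*d) (0:ℝ) :=
      ((((hasDerivAt_pow 3 (0:ℝ)).const_mul (4*b)).add
        ((hasDerivAt_pow 2 (0:ℝ)).const_mul (6*c))).add
        (HasDerivAt.const_mul (6*d) (hasDerivAt_id (0:ℝ)))).congr_deriv (by push_cast; ring)
    have h2N : HasDerivAt (fun x : ℝ => 2*(b*x^4 + 2*c*x^3 + 3*d*x^2))
        (2*(4*b*0^3 + 6*c*0^2 + 6*d*0)) (0:ℝ) := (hNder 0).const_mul 2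
    have hQ' : HasDerivAt (fun x : ℝ => 3*a*x^2 + 2*b*x + c) (6*a*0 + 2*b) (0:ℝ) :=
      ((((hasDerivAt_pow 2 (0:ℝ)).const_mul (3*a)).add
        (HasDerivAt.const_mul (2*b) (hasDerivAt_id (0:ℝ)))).add_const c).congr_deriv (by push_cast; ring)
    have hS := (hA.mul (hQder 0)).sub (h2N.mul hQ')
    refine (hS.div ((hQder 0).pow 3) (pow_ne_zero 3 hQ0ne)).congr_deriv ?_
    simp only [hQ]
    norm_num
    field_simp
  refine ⟨?_, ?_, ?_⟩
  · rw [(h1 0 hQ0ne).deriv, hg₁]; norm_num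
  · rw [hder1.deriv_eq, (h2 0 hQ0ne).deriv, hg₂]; norm_num
  · rw [hder1.deriv.deriv_eq, hder2.deriv_eq, h3.deriv]

set_option maxHeartbeats 1000000 in
/-- The piecewise rational mapping M³_{2,1;2;c₁,c₂,c₃} of Eq. (16): it vanishes to
third order at 0 with M'''(0) = 6/(c₁c₃²) ≠ 0, fixes c₃, and M(ϖ) = O(ϖ³) as
ϖ → 0⁺. -/
theorem stmt18 (c₁ c₂ c₃ : ℝ) (hc₁ : 0 < c₁) (hc₂ : 0 < c₂) (hc₃ : 0 < c₃)
    (M : ℝ → ℝ)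
    (hMdef : ∀ x : ℝ, M x =
      if x ≤ c₃ then x ^ 3 / (x ^ 2 + c₂ * x * (c₃ - x) ^ 2 + c₁ * (c₃ - x) ^ 2) else x) :
    M 0 = 0 ∧ deriv M 0 = 0 ∧ deriv (deriv M) 0 = 0 ∧
    deriv (deriv (deriv M)) 0 = 6 / (c₁ * c₃ ^ 2) ∧
    6 / (c₁ * c₃ ^ 2) ≠ 0 ∧ M c₃ = c₃ ∧
    ∃ C > 0, ∃ δ > 0, ∀ x : ℝ, 0 < x → x < δ → |M x| ≤ C * x ^ 3 := by
  have hdpos : 0 < c₁ * c₃ ^ 2 := by positivity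
  have hdne : c₁ * c₃ ^ 2 ≠ 0 := ne_of_gt hdpos
  obtain ⟨k1, k2, k3⟩ := aux18 c₂ (1 + c₁ - 2*c₂*c₃) (c₂*c₃^2 - 2*c₁*c₃) (c₁*c₃^2) hdne
    (fun x => c₂*x^3 + (1 + c₁ - 2*c₂*c₃)*x^2 + (c₂*c₃^2 - 2*c₁*c₃)*x + c₁*c₃^2)
    (fun x => x^3 / (c₂*x^3 + (1 + c₁ - 2*c₂*c₃)*x^2 + (c₂*c₃^2 - 2*c₁*c₃)*x + c₁*c₃^2))
    (fun x => ((1 + c₁ - 2*c₂*c₃)*x^4 + 2*(c₂*c₃^2 - 2*c₁*c₃)*x^3 + 3*(c₁*c₃^2)*x^2)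
      / (c₂*x^3 + (1 + c₁ - 2*c₂*c₃)*x^2 + (c₂*c₃^2 - 2*c₁*c₃)*x + c₁*c₃^2)^2)
    (fun x => ((4*(1 + c₁ - 2*c₂*c₃)*x^3 + 6*(c₂*c₃^2 - 2*c₁*c₃)*x^2 + 6*(c₁*c₃^2)*x)
        * (c₂*x^3 + (1 + c₁ - 2*c₂*c₃)*x^2 + (c₂*c₃^2 - 2*c₁*c₃)*x + c₁*c₃^2)
        - (2*((1 + c₁ - 2*c₂*c₃)*x^4 + 2*(c₂*c₃^2 - 2*c₁*c₃)*x^3 + 3*(c₁*c₃^2)*x^2))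
          * (3*c₂*x^2 + 2*(1 + c₁ - 2*c₂*c₃)*x + (c₂*c₃^2 - 2*c₁*c₃)))
      / (c₂*x^3 + (1 + c₁ - 2*c₂*c₃)*x^2 + (c₂*c₃^2 - 2*c₁*c₃)*x + c₁*c₃^2)^3)
    rfl rfl rfl rfl
  have hMg : M =ᶠ[nhds (0:ℝ)]
      (fun x => x^3 / (c₂*x^3 + (1 + c₁ - 2*c₂*c₃)*x^2 + (c₂*c₃^2 - 2*c₁*c₃)*x + c₁*c₃^2)) := by
    filter_upwards [eventually_lt_nhds hc₃] with x hx
    rw [hMdef x, if_pos hx.le,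
      show x ^ 2 + c₂ * x * (c₃ - x) ^ 2 + c₁ * (c₃ - x) ^ 2
        = c₂*x^3 + (1 + c₁ - 2*c₂*c₃)*x^2 + (c₂*c₃^2 - 2*c₁*c₃)*x + c₁*c₃^2 from by ring]
  refine ⟨?_, ?_, ?_, ?_, ?_, ?_, ?_⟩
  · rw [hMdef 0, if_pos hc₃.le]; norm_num
  · rw [hMg.deriv_eq]; exact k1
  · rw [hMg.deriv.deriv_eq]; exact k2
  · rw [hMg.deriv.deriv.deriv_eq]; exact k3
  · positivity
  · rw [hMdef c₃, if_pos le_rfl, sub_self]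
    rw [div_eq_iff (by positivity)]
    ring
  · -- Big-O bound
    have hDcont : Continuous
        (fun x : ℝ => x ^ 2 + c₂ * x * (c₃ - x) ^ 2 + c₁ * (c₃ - x) ^ 2) := by continuity
    have hD0 : (fun x : ℝ => x ^ 2 + c₂ * x * (c₃ - x) ^ 2 + c₁ * (c₃ - x) ^ 2) 0
        = c₁ * c₃ ^ 2 := by norm_num
    have htend := hDcont.tendsto 0
    norm_num at htend
    have hev : ∀ᶠ x in nhds (0:ℝ),
        c₁ * c₃ ^ 2 / 2 < x ^ 2 + c₂ * x * (c₃ - x) ^ 2 + c₁ * (c₃ - x) ^ 2 ∧ x < c₃ := by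
      filter_upwards [htend.eventually (eventually_gt_nhds (show c₁*c₃^2/2 < c₁*c₃^2 by linarith)),
        eventually_lt_nhds hc₃] with x h₁ h₂
      exact ⟨h₁, h₂⟩
    obtain ⟨δ, hδ, hδ'⟩ := Metric.eventually_nhds_iff.mp hev
    refine ⟨2 / (c₁ * c₃ ^ 2), by positivity, δ, hδ, fun x hx hxδ => ?_⟩
    have hx' := hδ' (show dist x 0 < δ by rw [Real.dist_eq, sub_zero, abs_of_pos hx]; exact hxδ)
    obtain ⟨hD, hxc⟩ := hx'
    have hDpos : 0 < x ^ 2 + c₂ * x * (c₃ - x) ^ 2 + c₁ * (c₃ - x) ^ 2 := by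
      have : 0 < c₁ * c₃ ^ 2 / 2 := by positivity
      linarith
    rw [hMdef x, if_pos hxc.le, abs_of_nonneg (by positivity)]
    rw [div_le_iff₀ hDpos]
    have h1 : x ^ 3 = 2 / (c₁ * c₃ ^ 2) * x ^ 3 * (c₁ * c₃ ^ 2 / 2) := by
      field_simp
    nlinarith [pow_pos hx 3, mul_le_mul_of_nonneg_left hD.le
      (show (0:ℝ) ≤ 2 / (c₁ * c₃ ^ 2) * x ^ 3 by positivity)]
end

section
/- Let f be smooth with a second-order critical point at x_c = x_j + λΔx (f'(x_c) = f''(x_c) = 0, f'''(x_c) ≠ 0), λ ∈ (-1,1). Then the two-point indicators satisfy β₀⁽²⁾ = (1/36)(3λ² + 3λ + 1)² f'''(x_c)² Δx⁶ + O(Δx⁷) and β₁⁽²⁾ = (1/36)(3λ² − 3λ + 1)² f'''(x_c)² Δx⁶ + O(Δx⁷), and the polynomials 3λ² ± 3λ + 1 have no real roots, so the leading Δx⁶ coefficients are nonzero for all λ ∈ (-1,1). -/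
/-- MVT step: if `u 0 = 0` and `|u'| ≤ M|s|^k` on `[-1,1]`, then `|u t| ≤ M|t|^(k+1)`. -/
lemma mvt_step (u v : ℝ → ℝ) (hd : ∀ t, HasDerivAt u (v t) t) (h0 : u 0 = 0)
    (M : ℝ) (hM : 0 ≤ M) (k : ℕ) (hb : ∀ s : ℝ, |s| ≤ 1 → |v s| ≤ M * |s| ^ k) :
    ∀ t : ℝ, |t| ≤ 1 → |u t| ≤ M * |t| ^ (k + 1) := by
  intro t ht
  have hs : ∀ x ∈ Set.uIcc (0:ℝ) t, |x| ≤ |t| := by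
    intro x hx
    rcases le_total (0:ℝ) t with h | h
    · rw [Set.uIcc_of_le h] at hx
      rw [abs_of_nonneg hx.1, abs_of_nonneg h]; exact hx.2
    · rw [Set.uIcc_of_ge h] at hx
      rw [abs_of_nonpos hx.2, abs_of_nonpos h]; linarith [hx.1]
  have key := Convex.norm_image_sub_le_of_norm_hasDerivWithin_le
    (f := u) (f' := v) (s := Set.uIcc 0 t) (C := M * |t| ^ k)
    (fun x _ => (hd x).hasDerivWithinAt)
    (fun x hx => by
      rw [Real.norm_eq_abs]
      calc |v x| ≤ M * |x| ^ k := hb x (le_trans (hs x hx) ht)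
        _ ≤ M * |t| ^ k := mul_le_mul_of_nonneg_left (pow_le_pow_left₀ (abs_nonneg _) (hs x hx) k) hM)
    (convex_uIcc 0 t) Set.left_mem_uIcc Set.right_mem_uIcc
  rw [h0, sub_zero, sub_zero, Real.norm_eq_abs, Real.norm_eq_abs] at key
  calc |u t| ≤ M * |t| ^ k * |t| := key
    _ = M * |t| ^ (k + 1) := by ring

/-- Cubic Taylor approximation at a second-order critical point. -/
lemma cubic_approx (f : ℝ → ℝ) (hf : ContDiff ℝ (⊤ : ℕ∞) f) (xc : ℝ)
    (h1 : deriv f xc = 0) (h2 : iteratedDeriv 2 f xc = 0) :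
    ∃ M ≥ 0, ∀ t : ℝ, |t| ≤ 1 →
      |f (xc + t) - f xc - iteratedDeriv 3 f xc / 6 * t ^ 3| ≤ M * |t| ^ 4 := by
  set c : ℝ := iteratedDeriv 3 f xc / 6 with hc
  have hdiff : ∀ n : ℕ, Differentiable ℝ (iteratedDeriv n f) := by
    intro n
    exact (hf.of_le (by exact_mod_cast le_top) : ContDiff ℝ ((n+1 : ℕ) : ℕ∞) f).differentiable_iteratedDeriv n
      (by exact_mod_cast n.lt_succ_self)
  have hshift : ∀ n : ℕ, ∀ t : ℝ,
      HasDerivAt (fun s => iteratedDeriv n f (xc + s)) (iteratedDeriv (n+1) f (xc + t)) t := by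
    intro n t
    have h2' : HasDerivAt (fun s : ℝ => xc + s) 1 t := by
      simpa using (hasDerivAt_id t).const_add xc
    have h := ((hdiff n (xc + t)).hasDerivAt).comp t h2'
    rw [mul_one] at h
    have hder : deriv (iteratedDeriv n f) (xc + t) = iteratedDeriv (n+1) f (xc + t) := by
      rw [iteratedDeriv_succ]
    rw [hder] at h
    exact h
  set u0 : ℝ → ℝ := fun t => f (xc + t) - (f xc + c * t ^ 3) with hu0
  set u1 : ℝ → ℝ := fun t => iteratedDeriv 1 f (xc + t) - 3 * c * t ^ 2 with hu1
  set u2 : ℝ → ℝ := fun t => iteratedDeriv 2 f (xc + t) - 6 * c * t with hu2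
  set u3 : ℝ → ℝ := fun t => iteratedDeriv 3 f (xc + t) - 6 * c with hu3
  set v : ℝ → ℝ := fun t => iteratedDeriv 4 f (xc + t) with hv
  have hd0 : ∀ t, HasDerivAt u0 (u1 t) t := by
    intro t
    have ha : HasDerivAt (fun s => f (xc + s)) (iteratedDeriv 1 f (xc + t)) t := by
      have := hshift 0 t; simpa [iteratedDeriv_zero] using this
    have hb : HasDerivAt (fun s : ℝ => f xc + c * s ^ 3) (c * (3 * t ^ 2)) t := by
      have := ((hasDerivAt_pow 3 t).const_mul c).const_add (f xc)
      norm_num at this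
      simpa using this
    have := ha.sub hb
    exact this.congr_deriv (by simp only [hu1]; ring)
  have hd1 : ∀ t, HasDerivAt u1 (u2 t) t := by
    intro t
    have ha := hshift 1 t
    have hb : HasDerivAt (fun s : ℝ => 3 * c * s ^ 2) (3 * c * (2 * t)) t := by
      have := (hasDerivAt_pow 2 t).const_mul (3 * c)
      norm_num at this
      convert this using 1
      all_goals ring
    have := ha.sub hb
    exact this.congr_deriv (by simp only [hu2]; ring)
  have hd2 : ∀ t, HasDerivAt u2 (u3 t) t := by
    intro t
    have ha := hshift 2 t
    have hb : HasDerivAt (fun s : ℝ => 6 * c * s) (6 * c) t := by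
      simpa using (hasDerivAt_id t).const_mul (6 * c)
    have := ha.sub hb
    exact this
  have hd3 : ∀ t, HasDerivAt u3 (v t) t := by
    intro t
    exact (hshift 3 t).sub_const (6 * c)
  obtain ⟨K, hK⟩ := (isCompact_Icc : IsCompact (Set.Icc (-1:ℝ) 1)).exists_bound_of_continuousOn
    (((hf.continuous_iteratedDeriv 4 (WithTop.coe_le_coe.mpr le_top)).comp (continuous_const.add continuous_id)).continuousOn
      (s := Set.Icc (-1:ℝ) 1))
  set M : ℝ := max K 0 with hM
  have hMnn : (0:ℝ) ≤ M := le_max_right _ _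
  have hbv : ∀ s : ℝ, |s| ≤ 1 → |v s| ≤ M * |s| ^ 0 := by
    intro s hs
    rw [pow_zero, mul_one]
    have := hK s (abs_le.mp hs |> fun h => Set.mem_Icc.mpr h)
    rw [Real.norm_eq_abs] at this
    exact le_trans this (le_max_left _ _)
  have s3 := mvt_step u3 v hd3 (by simp [hu3, hc]; ring) M hMnn 0 hbv
  have s2 := mvt_step u2 u3 hd2 (by simp [hu2, h2]) M hMnn 1 s3
  have s1 := mvt_step u1 u2 hd1 (by simp [hu1, iteratedDeriv_one, h1]) M hMnn 2 s2
  have s0 := mvt_step u0 u1 hd0 (by simp [hu0]) M hMnn 3 s1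
  refine ⟨M, hMnn, fun t ht => ?_⟩
  have := s0 t ht
  have heq : f (xc + t) - f xc - c * t ^ 3 = u0 t := by simp [hu0]; ring
  rw [heq]
  exact this

/-- Squared-difference expansion bound. -/
lemma diff_sq_bound (f : ℝ → ℝ) (hf : ContDiff ℝ (⊤ : ℕ∞) f) (xc : ℝ)
    (h1 : deriv f xc = 0) (h2 : iteratedDeriv 2 f xc = 0) (a b : ℝ)
    (ha : |a| ≤ 2) (hb : |b| ≤ 2) :
    ∃ C > 0, ∃ δ > 0, ∀ h : ℝ, 0 < h → h < δ →
      |(f (xc + a * h) - f (xc + b * h)) ^ 2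
        - (iteratedDeriv 3 f xc / 6 * (a ^ 3 - b ^ 3)) ^ 2 * h ^ 6| ≤ C * h ^ 7 := by
  obtain ⟨M, hMnn, hM⟩ := cubic_approx f hf xc h1 h2
  set c : ℝ := iteratedDeriv 3 f xc / 6
  set A : ℝ := c * (a ^ 3 - b ^ 3) with hA
  refine ⟨32 * M * (2 * |A| + 32 * M) + 1, by positivity, 1/2, by norm_num, fun h hh hhd => ?_⟩
  have hh1 : h ≤ 1 := by linarith
  have hah : |a * h| ≤ 1 := by
    rw [abs_mul, abs_of_pos hh]; nlinarith [abs_nonneg a]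
  have hbh : |b * h| ≤ 1 := by
    rw [abs_mul, abs_of_pos hh]; nlinarith [abs_nonneg b]
  have hEa := hM (a * h) hah
  have hEb := hM (b * h) hbh
  set Ea : ℝ := f (xc + a * h) - f xc - c * (a * h) ^ 3 with hEa'
  set Eb : ℝ := f (xc + b * h) - f xc - c * (b * h) ^ 3 with hEb'
  have habound : |Ea| ≤ 16 * M * h ^ 4 := by
    refine le_trans hEa ?_
    have : |a * h| ^ 4 ≤ (2 * h) ^ 4 := by
      have : |a * h| ≤ 2 * h := by rw [abs_mul, abs_of_pos hh]; nlinarith [abs_nonneg a]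
      exact pow_le_pow_left₀ (abs_nonneg _) this 4
    nlinarith [pow_nonneg (abs_nonneg (a * h)) 4]
  have hbbound : |Eb| ≤ 16 * M * h ^ 4 := by
    refine le_trans hEb ?_
    have : |b * h| ^ 4 ≤ (2 * h) ^ 4 := by
      have : |b * h| ≤ 2 * h := by rw [abs_mul, abs_of_pos hh]; nlinarith [abs_nonneg b]
      exact pow_le_pow_left₀ (abs_nonneg _) this 4
    nlinarith [pow_nonneg (abs_nonneg (b * h)) 4]
  set E : ℝ := Ea - Eb with hE'
  have hEbound : |E| ≤ 32 * M * h ^ 4 := by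
    calc |E| ≤ |Ea| + |Eb| := abs_sub _ _
      _ ≤ 32 * M * h ^ 4 := by linarith
  have hD : f (xc + a * h) - f (xc + b * h) = A * h ^ 3 + E := by
    rw [hE', hEa', hEb', hA]; ring
  have key : (f (xc + a * h) - f (xc + b * h)) ^ 2 - A ^ 2 * h ^ 6 = E * (2 * A * h ^ 3 + E) := by
    rw [hD]; ring
  rw [key, abs_mul]
  have hfac : |2 * A * h ^ 3 + E| ≤ 2 * |A| * h ^ 3 + 32 * M * h ^ 4 := by
    calc |2 * A * h ^ 3 + E| ≤ |2 * A * h ^ 3| + |E| := abs_add_le _ _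
      _ ≤ 2 * |A| * h ^ 3 + 32 * M * h ^ 4 := by
          rw [abs_mul, abs_mul, abs_of_pos (pow_pos hh 3)]
          simp [abs_of_nonneg]
          linarith [hEbound]
  have := mul_le_mul hEbound hfac (abs_nonneg _) (by positivity)
  refine le_trans this ?_
  have h87 : h ^ 8 ≤ h ^ 7 := pow_le_pow_of_le_one (le_of_lt hh) hh1 (by norm_num)
  nlinarith [mul_nonneg (mul_nonneg hMnn hMnn) (sub_nonneg.mpr h87), pow_pos hh 7,
    mul_nonneg hMnn (abs_nonneg A), mul_nonneg (mul_nonneg hMnn (abs_nonneg A)) (le_of_lt (pow_pos hh 7))]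

/-- Expansions of the two-point indicators β₀⁽²⁾, β₁⁽²⁾ at a second-order critical
point x_c = x_j + λΔx: leading terms (1/36)(3λ²±3λ+1)² f'''(x_c)² Δx⁶, with the
quadratics 3λ²±3λ+1 having no real roots, so the leading coefficients never
vanish. -/
theorem stmt19 (f : ℝ → ℝ) (hf : ContDiff ℝ (⊤ : ℕ∞) f) (xc lam : ℝ)
    (hlam : lam ∈ Set.Ioo (-1 : ℝ) 1)
    (h1 : deriv f xc = 0) (h2 : iteratedDeriv 2 f xc = 0)
    (h3 : iteratedDeriv 3 f xc ≠ 0) :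
    (∃ C > 0, ∃ δ > 0, ∀ h : ℝ, 0 < h → h < δ →
      |(f (xc - lam * h) - f (xc - lam * h - h)) ^ 2
        - (1 / 36) * (3 * lam ^ 2 + 3 * lam + 1) ^ 2 * (iteratedDeriv 3 f xc) ^ 2 * h ^ 6|
        ≤ C * h ^ 7) ∧
    (∃ C > 0, ∃ δ > 0, ∀ h : ℝ, 0 < h → h < δ →
      |(f (xc - lam * h + h) - f (xc - lam * h)) ^ 2
        - (1 / 36) * (3 * lam ^ 2 - 3 * lam + 1) ^ 2 * (iteratedDeriv 3 f xc) ^ 2 * h ^ 6|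
        ≤ C * h ^ 7) ∧
    (∀ x : ℝ, 3 * x ^ 2 + 3 * x + 1 ≠ 0) ∧
    (∀ x : ℝ, 3 * x ^ 2 - 3 * x + 1 ≠ 0) ∧
    (1 / 36) * (3 * lam ^ 2 + 3 * lam + 1) ^ 2 * (iteratedDeriv 3 f xc) ^ 2 ≠ 0 ∧
    (1 / 36) * (3 * lam ^ 2 - 3 * lam + 1) ^ 2 * (iteratedDeriv 3 f xc) ^ 2 ≠ 0 := by
  obtain ⟨hl1, hl2⟩ := hlam
  have hq1 : ∀ x : ℝ, 3 * x ^ 2 + 3 * x + 1 ≠ 0 := by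
    intro x
    nlinarith [sq_nonneg (x + 1/2)]
  have hq2 : ∀ x : ℝ, 3 * x ^ 2 - 3 * x + 1 ≠ 0 := by
    intro x
    nlinarith [sq_nonneg (x - 1/2)]
  refine ⟨?_, ?_, hq1, hq2, ?_, ?_⟩
  · obtain ⟨C, hC, δ, hδ, hbd⟩ := diff_sq_bound f hf xc h1 h2 (-lam) (-lam - 1)
      (by rw [abs_le]; constructor <;> linarith [neg_abs_le lam, le_abs_self lam, abs_le.mpr ⟨le_of_lt hl1, le_of_lt hl2⟩])
      (by rw [abs_le]; constructor <;> linarith)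
    refine ⟨C, hC, δ, hδ, fun h hh hhd => ?_⟩
    have := hbd h hh hhd
    have e1 : xc + -lam * h = xc - lam * h := by ring
    have e2 : xc + (-lam - 1) * h = xc - lam * h - h := by ring
    rw [e1, e2] at this
    have e3 : (iteratedDeriv 3 f xc / 6 * ((-lam) ^ 3 - (-lam - 1) ^ 3)) ^ 2
        = (1 / 36) * (3 * lam ^ 2 + 3 * lam + 1) ^ 2 * (iteratedDeriv 3 f xc) ^ 2 := by ring
    rw [e3] at this
    exact this
  · obtain ⟨C, hC, δ, hδ, hbd⟩ := diff_sq_bound f hf xc h1 h2 (1 - lam) (-lam)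
      (by rw [abs_le]; constructor <;> linarith)
      (by rw [abs_le]; constructor <;> linarith)
    refine ⟨C, hC, δ, hδ, fun h hh hhd => ?_⟩
    have := hbd h hh hhd
    have e1 : xc + (1 - lam) * h = xc - lam * h + h := by ring
    have e2 : xc + -lam * h = xc - lam * h := by ring
    rw [e1, e2] at this
    have e3 : (iteratedDeriv 3 f xc / 6 * ((1 - lam) ^ 3 - (-lam) ^ 3)) ^ 2
        = (1 / 36) * (3 * lam ^ 2 - 3 * lam + 1) ^ 2 * (iteratedDeriv 3 f xc) ^ 2 := by ring
    rw [e3] at this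
    exact this
  · exact mul_ne_zero (mul_ne_zero (by norm_num) (pow_ne_zero 2 (hq1 lam))) (pow_ne_zero 2 h3)
  · exact mul_ne_zero (mul_ne_zero (by norm_num) (pow_ne_zero 2 (hq2 lam))) (pow_ne_zero 2 h3)
end
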